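/- arXiv:1302.4239 — 2 statements merged into one kernel-verified Lean document; each statement's English description precedes it below -/
import Mathlib

section
/- Define p_1(n,3,x,s) by the recurrence p_1(n+3) = x·p_1(n+2) - s·p_1(n) with p_1(0)=3, p_1(1)=x, p_1(2)=x^2, p_1(3)=x^3-3s. Then p_1(n,3,x+1,x) = 1 + L_n(x,x), where L_n is the Lucas polynomial. -/
/-- The bivariate Lucas polynomials: `L 0 = 2`, `L 1 = x`,
`L (n+2) = x * L (n+1) + s * L n`. -/
def lucas {R : Type*} [CommRing R] (x s : R) : ℕ → R
  | 0 => 2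
  | 1 => x
  | (n + 2) => x * lucas x s (n + 1) + s * lucas x s n

/-- The polynomials `p₁(n,3,x,s)`: `p₁(0)=3`, `p₁(1)=x`, `p₁(2)=x²`,
and `p₁(n+3) = x·p₁(n+2) - s·p₁(n)` (so in particular `p₁(3)=x³-3s`). -/
def p1three {R : Type*} [CommRing R] (x s : R) : ℕ → R
  | 0 => 3
  | 1 => x
  | 2 => x ^ 2
  | (n + 3) => x * p1three x s (n + 2) - s * p1three x s n

/-!
The characteristic polynomial of the `p₁` recurrence at `(x + 1, x)` factors as
`t³ - (x + 1) t² + x = (t - 1) (t² - x t - x)`. The second factor is the characteristic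
polynomial of `L_n(x, x)` and the first kills constants, so `1 + L_n(x, x)` satisfies the `p₁`
recurrence; it also has the same three initial values.
-/

section

variable {R : Type*} [CommRing R]

theorem lucas_add_three (x s : R) (n : ℕ) :
    lucas x s (n + 3) =
      (x + 1) * lucas x s (n + 2) + (s - x) * lucas x s (n + 1) - s * lucas x s n := by
  simp only [lucas]
  ring

theorem eq_p1three_of_recurrence {x s : R} {u : ℕ → R} (h0 : u 0 = 3) (h1 : u 1 = x)
    (h2 : u 2 = x ^ 2) (hrec : ∀ n, u (n + 3) = x * u (n + 2) - s * u n) (n : ℕ) :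
    u n = p1three x s n := by
  induction n using p1three.induct with
  | case1 => exact h0
  | case2 => exact h1
  | case3 => exact h2
  | case4 n ih₂ ih₀ => rw [hrec, p1three, ih₂, ih₀]

end

theorem stmt_8 {R : Type*} [CommRing R] (n : ℕ) (x : R) :
    p1three (x + 1) x n = 1 + lucas x x n := by
  refine (eq_p1three_of_recurrence (u := fun k => 1 + lucas x x k) ?_ ?_ ?_ (fun k => ?_) n).symm
  · norm_num [lucas]
  · simp only [lucas]
    ring
  · simp only [lucas]
    ring
  · rw [lucas_add_three, sub_self, zero_mul, add_zero]
    ring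
end

section
/- Define p̃_1(n,3,x,s) = p_1(n,3,x,s) for n ≥ 1 (via the recurrence p_1(n+3) = x·p_1(n+2) - s·p_1(n), p_1(1)=x, p_1(2)=x^2, p_1(3)=x^3-3s) and p̃_1(0,3,x,s) = 1. Then ∑_{k=0}^{⌊n/3⌋} C(n,k) · p̃_1(n-3k,3,x,s) · s^k = x^n for all n ≥ 0. -/
def ptilde1three {R : Type*} [CommRing R] (x s : R) (n : ℕ) : R :=
  if n = 0 then 1 else p1three x s n

open Finset

section

variable {R : Type*} [CommRing R]

theorem sum_choose_succ_mul_sub_three_mul (c : ℤ → R) (x s : R) (n : ℕ) :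
    ∑ i ∈ range (n + 2), ((n + 1).choose i : R) * c ((n + 1 : ℕ) - 3 * i) * s ^ i =
      x * ∑ i ∈ range (n + 1), (n.choose i : R) * c (n - 3 * i) * s ^ i +
        ∑ i ∈ range (n + 1), (n.choose i : R) *
          (c (n - 3 * i + 1) + s * c (n - 3 * i - 2) - x * c (n - 3 * i)) * s ^ i := by
  calc _ = ∑ i ∈ range (n + 2),
          ((n + 1).choose i : R) * (c ((n + 1 - i : ℕ) - 2 * i) * s ^ i) := by
        refine sum_congr rfl fun i hi => ?_
        rw [mem_range] at hi
        rw [show ((n + 1 : ℕ) : ℤ) - 3 * i = (n + 1 - i : ℕ) - 2 * i by omega, mul_assoc]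
    _ = ∑ i ∈ range (n + 1), (n.choose i : R) * (c ((n + 1 - i : ℕ) - 2 * i) * s ^ i) +
          ∑ i ∈ range (n + 1),
            (n.choose i : R) * (c ((n - i : ℕ) - 2 * (i + 1 : ℕ)) * s ^ (i + 1)) :=
        sum_choose_succ_mul (fun i j => c ((j : ℤ) - 2 * i) * s ^ i) n
    _ = _ := by
        rw [mul_sum, ← sum_add_distrib, ← sum_add_distrib]
        refine sum_congr rfl fun i hi => ?_
        rw [mem_range] at hi
        rw [show ((n + 1 - i : ℕ) : ℤ) - 2 * i = n - 3 * i + 1 by omega,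
          show ((n - i : ℕ) : ℤ) - 2 * (i + 1 : ℕ) = n - 3 * i - 2 by omega, pow_succ]
        ring

theorem Nat.choose_three_mul_add_two_succ (q : ℕ) :
    (3 * q + 2).choose (q + 1) = 2 * (3 * q + 2).choose q := by
  have h := Nat.choose_succ_right_eq (3 * q + 2) q
  rw [show 3 * q + 2 - q = 2 * (q + 1) by omega, ← mul_assoc, mul_comm _ 2] at h
  exact Nat.eq_of_mul_eq_mul_right q.succ_pos h

def ptilde1threeInt (x s : R) (m : ℤ) : R :=
  if m < 0 then 0 else ptilde1three x s m.toNat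

theorem ptilde1threeInt_natCast (x s : R) (n : ℕ) : ptilde1threeInt x s n = ptilde1three x s n := by
  simp [ptilde1threeInt]

theorem ptilde1threeInt_of_neg (x s : R) {m : ℤ} (hm : m < 0) : ptilde1threeInt x s m = 0 :=
  if_pos hm

theorem ptilde1three_add_four (x s : R) (k : ℕ) :
    ptilde1three x s (k + 4) = x * ptilde1three x s (k + 3) - s * ptilde1three x s (k + 1) := by
  simp only [ptilde1three, Nat.add_eq_zero_iff, OfNat.ofNat_ne_zero, one_ne_zero, and_false,
    if_false]
  rfl

theorem ptilde1threeInt_defect (x s : R) (m : ℤ) :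
    ptilde1threeInt x s (m + 1) + s * ptilde1threeInt x s (m - 2) - x * ptilde1threeInt x s m =
      if m = 2 then -2 * s else if m = -1 then 1 else 0 := by
  by_cases hneg : m < -1
  · rw [ptilde1threeInt_of_neg x s (show m + 1 < 0 by omega),
      ptilde1threeInt_of_neg x s (show m - 2 < 0 by omega),
      ptilde1threeInt_of_neg x s (show m < 0 by omega), if_neg (by omega), if_neg (by omega)]
    ring
  by_cases hsmall : m < 3
  · interval_cases m <;> simp [ptilde1threeInt, ptilde1three, p1three] <;> ring
  obtain ⟨k, rfl⟩ : ∃ k : ℕ, m = k + 3 := ⟨(m - 3).toNat, by omega⟩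
  rw [show (k : ℤ) + 3 + 1 = (k + 4 : ℕ) by push_cast; ring,
    show (k : ℤ) + 3 - 2 = (k + 1 : ℕ) by push_cast; ring,
    show (k : ℤ) + 3 = (k + 3 : ℕ) by push_cast; ring,
    if_neg (by omega), if_neg (by omega), ptilde1threeInt_natCast, ptilde1threeInt_natCast,
    ptilde1threeInt_natCast, ptilde1three_add_four]
  ring

theorem sum_choose_mul_ptilde1threeInt_defect (x s : R) (n : ℕ) :
    ∑ i ∈ range (n + 1), (n.choose i : R) *
      (ptilde1threeInt x s (n - 3 * i + 1) + s * ptilde1threeInt x s (n - 3 * i - 2) -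
        x * ptilde1threeInt x s (n - 3 * i)) * s ^ i = 0 := by
  simp_rw [ptilde1threeInt_defect]
  by_cases hn : n % 3 = 2
  · obtain ⟨q, rfl⟩ : ∃ q, n = 3 * q + 2 := ⟨n / 3, by omega⟩
    rw [sum_eq_add_of_mem q (q + 1) (mem_range.mpr (by omega))
      (mem_range.mpr (by omega)) (by omega)]
    · push_cast
      rw [if_pos (by ring), if_neg (by omega), if_pos (by ring), Nat.choose_three_mul_add_two_succ]
      push_cast
      ring
    · intro i _ hi
      rw [if_neg (by omega), if_neg (by omega), mul_zero, zero_mul]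
  · refine sum_eq_zero fun i _ => ?_
    rw [if_neg (by omega), if_neg (by omega), mul_zero, zero_mul]

theorem sum_choose_mul_ptilde1threeInt (x s : R) (n : ℕ) :
    ∑ i ∈ range (n + 1), (n.choose i : R) * ptilde1threeInt x s (n - 3 * i) * s ^ i = x ^ n := by
  induction n with
  | zero => simp [ptilde1threeInt, ptilde1three]
  | succ n ih =>
    rw [sum_choose_succ_mul_sub_three_mul, ih, sum_choose_mul_ptilde1threeInt_defect, pow_succ]
    ring

theorem sum_range_div_three_eq_sum_ptilde1threeInt (x s : R) (n : ℕ) :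
    ∑ k ∈ range (n / 3 + 1), (n.choose k : R) * ptilde1three x s (n - 3 * k) * s ^ k =
      ∑ k ∈ range (n + 1), (n.choose k : R) * ptilde1threeInt x s (n - 3 * k) * s ^ k := by
  refine sum_subset_zero_on_sdiff (range_subset_range.mpr (by omega)) ?_ ?_
  · intro k hk
    simp only [mem_sdiff, mem_range] at hk
    rw [ptilde1threeInt_of_neg x s (by omega), mul_zero, zero_mul]
  · intro k hk
    rw [mem_range] at hk
    rw [show (n : ℤ) - 3 * k = (n - 3 * k : ℕ) by omega, ptilde1threeInt_natCast]

end

theorem stmt_9 {R : Type*} [CommRing R] (n : ℕ) (x s : R) :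
    ∑ k ∈ Finset.range (n / 3 + 1),
      (Nat.choose n k : R) * ptilde1three x s (n - 3 * k) * s ^ k = x ^ n := by
  rw [sum_range_div_three_eq_sum_ptilde1threeInt, sum_choose_mul_ptilde1threeInt]
end
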